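/- Let X be a Banach space and let T = {T(t,s) : t, s > a₀} be an invertible evolution family on X. Suppose T is uniformly noncritical on [a₀*,∞) with constants θ ∈ (0,1) and C > 0, and suppose there is a constant D ≥ 1 such that ‖T(t,s)v‖ ≤ D‖v‖ for all t ≥ s ≥ a₀* and all v ∈ S(s), where S(s) := { v ∈ X : sup_{t ≥ s} ‖T(t,s)v‖ < ∞ }. Then, with B := θ⁻¹ D and α := −C⁻¹ ln θ > 0, one has ‖T(t,s)v‖ ≤ B e^{−α(t−s)} ‖v‖ for all t ≥ s ≥ a₀* and all v ∈ S(s). -/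
import Mathlib


open Set Real

noncomputable section

variable {X : Type*} [NormedAddCommGroup X] [NormedSpace ℝ X] [CompleteSpace X]

/-- An invertible evolution family on `X` with parameter `a₀ ∈ ℝ ∪ {-∞}` (modelled as
`EReal`), viewed as a two-parameter family `T t s` for all `t, s > a₀` (for `t < s`,
`T t s` is the inverse of `T s t`): `T t t = Id` for `t > a₀`; the two-sided cocycle
identity `T t s ∘ T s r = T t r` holds for all `t, s, r > a₀`; and for every `s > a₀`
and `v ∈ X`, the map `t ↦ T t s v` is continuous on `[s, ∞)`. -/
def IsInvertibleEvolutionFamily (a₀ : EReal) (T : ℝ → ℝ → X →L[ℝ] X) : Prop :=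
  (∀ t : ℝ, a₀ < (t : EReal) → T t t = ContinuousLinearMap.id ℝ X) ∧
  (∀ t s r : ℝ, a₀ < (t : EReal) → a₀ < (s : EReal) → a₀ < (r : EReal) →
    (T t s).comp (T s r) = T t r) ∧
  (∀ s : ℝ, a₀ < (s : EReal) → ∀ v : X, ContinuousOn (fun t => T t s v) (Set.Ici s))

/-- The stable set at time `s`: vectors with bounded forward orbit,
`S(s) = {v ∈ X : sup_{t ≥ s} ‖T t s v‖ < ∞}`. -/
def stableSet (T : ℝ → ℝ → X →L[ℝ] X) (s : ℝ) : Set X :=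
  {v : X | ∃ M : ℝ, ∀ t : ℝ, s ≤ t → ‖T t s v‖ ≤ M}

/-- Let `T` be an invertible evolution family, uniformly noncritical on
`[a₀*, ∞)` with constants `θ ∈ (0,1)`, `C > 0`, and suppose there is `D ≥ 1` with
`‖T t s v‖ ≤ D ‖v‖` for all `t ≥ s ≥ a₀*` and `v ∈ S(s)`. Then with `B := θ⁻¹ D` and
`α := -C⁻¹ ln θ > 0` one has `‖T t s v‖ ≤ B e^{-α (t-s)} ‖v‖` for all `t ≥ s ≥ a₀*`
and `v ∈ S(s)`. -/
theorem unifNoncritical_implies_exponential_contraction_on_stableSet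
    (a₀ : EReal) (T : ℝ → ℝ → X →L[ℝ] X) (astar : ℝ) (θ C D : ℝ)
    (hT : IsInvertibleEvolutionFamily a₀ T)
    (hastar : a₀ < (astar : EReal))
    (hθ : 0 < θ) (hθ1 : θ < 1) (hC : 0 < C)
    (hnc : ∀ (v : X) (t : ℝ), astar + C ≤ t →
      ∀ M : ℝ, (∀ u : ℝ, a₀ < (u : EReal) → |u - t| ≤ C → ‖T u t v‖ ≤ M) → ‖v‖ ≤ θ * M)
    (hD : 1 ≤ D)
    (hbound : ∀ (t s : ℝ) (v : X), astar ≤ s → s ≤ t → v ∈ stableSet T s →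
      ‖T t s v‖ ≤ D * ‖v‖) :
    0 < -C⁻¹ * Real.log θ ∧
    ∀ (t s : ℝ) (v : X), astar ≤ s → s ≤ t → v ∈ stableSet T s →
      ‖T t s v‖ ≤ θ⁻¹ * D * Real.exp (-(-C⁻¹ * Real.log θ) * (t - s)) * ‖v‖ := by

  obtain ⟨hid, hcoc, hcont⟩ := hT
  have hlogθ : Real.log θ < 0 := Real.log_neg hθ hθ1
  have hCinv : 0 < C⁻¹ := inv_pos.mpr hC
  have hα : 0 < -C⁻¹ * Real.log θ := by nlinarith
  refine ⟨hα, ?_⟩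
  intro t s v hs hst hv
  have hsa : a₀ < (s : EReal) := lt_of_lt_of_le hastar (by exact_mod_cast hs)
  have key : ∀ n : ℕ, ∀ r : ℝ, s + n * C ≤ r → ‖T r s v‖ ≤ θ ^ n * (D * ‖v‖) := by
    intro n
    induction n with
    | zero =>
      intro r hr
      have : s ≤ r := by push_cast at hr; linarith
      simpa using hbound r s v hs this hv
    | succ n ih =>
      intro r hr
      have hnC : 0 ≤ (n : ℝ) * C := by positivity
      have hrC : s + (n : ℝ) * C + C ≤ r := by push_cast at hr; linarith
      have hsr : s ≤ r := by linarith
      have h1 : astar + C ≤ r := by linarith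
      have hra : a₀ < (r : EReal) := lt_of_lt_of_le hsa (by exact_mod_cast hsr)
      have hM : ∀ u : ℝ, a₀ < (u : EReal) → |u - r| ≤ C →
          ‖T u r (T r s v)‖ ≤ θ ^ n * (D * ‖v‖) := by
        intro u hu huc
        have hcomp := hcoc u r s hu hra hsa
        have heq : T u r (T r s v) = T u s v := by
          rw [← ContinuousLinearMap.comp_apply, hcomp]
        rw [heq]
        apply ih
        have := (abs_le.mp huc).1
        linarith
      have h2 := hnc (T r s v) r h1 _ hM
      calc ‖T r s v‖ ≤ θ * (θ ^ n * (D * ‖v‖)) := h2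
        _ = θ ^ (n + 1) * (D * ‖v‖) := by ring
  have htsC : 0 ≤ (t - s) / C := div_nonneg (by linarith) hC.le
  set n := ⌊(t - s) / C⌋₊ with hn
  have hnle : (n : ℝ) * C ≤ t - s := by
    have h := Nat.floor_le htsC
    calc (n : ℝ) * C ≤ ((t - s) / C) * C := by nlinarith
      _ = t - s := div_mul_cancel₀ _ hC.ne'
  have h1 : ‖T t s v‖ ≤ θ ^ n * (D * ‖v‖) := key n t (by linarith)
  have hθn : θ ^ n ≤ θ⁻¹ * Real.exp (-(-C⁻¹ * Real.log θ) * (t - s)) := by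
    have hfl : (t - s) / C - 1 < (n : ℝ) := Nat.sub_one_lt_floor _
    have hpow : θ ^ n = Real.exp ((n : ℝ) * Real.log θ) := by
      rw [← Real.log_pow, Real.exp_log (pow_pos hθ n)]
    rw [hpow]
    have h2 : (n : ℝ) * Real.log θ ≤ ((t - s) / C - 1) * Real.log θ := by nlinarith
    calc Real.exp ((n : ℝ) * Real.log θ)
        ≤ Real.exp (((t - s) / C - 1) * Real.log θ) := Real.exp_le_exp.mpr h2
      _ = θ⁻¹ * Real.exp (-(-C⁻¹ * Real.log θ) * (t - s)) := by
        rw [← Real.exp_log (inv_pos.mpr hθ), ← Real.exp_add, Real.log_inv]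
        congr 1
        field_simp
        ring
  have hDv : 0 ≤ D * ‖v‖ := by positivity
  calc ‖T t s v‖ ≤ θ ^ n * (D * ‖v‖) := h1
    _ ≤ (θ⁻¹ * Real.exp (-(-C⁻¹ * Real.log θ) * (t - s))) * (D * ‖v‖) := by nlinarith
    _ = θ⁻¹ * D * Real.exp (-(-C⁻¹ * Real.log θ) * (t - s)) * ‖v‖ := by ring
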